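/- For every integer z ≥ 3, the real symmetric matrix M(2z,2z,2z) has exactly one negative eigenvalue and exactly three positive eigenvalues (counted with multiplicity); in particular its associated bilinear form has signature (+,+,+,−), i.e. it is of hyperbolic (Lorentzian) type. -/

import Mathlib

open Real Matrix

/-- The Coxeter–Schläfli matrix `M(u,v,w)`. -/
noncomputable def coxeterSchlafli (u v w : ℕ) : Matrix (Fin 4) (Fin 4) ℝ :=
  !![1, -Real.cos (π / u), 0, 0;
     -Real.cos (π / u), 1, -Real.cos (π / v), 0;
     0, -Real.cos (π / v), 1, -Real.cos (π / w);
     0, 0, -Real.cos (π / w), 1]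

/-!
The four eigenvalues of `M = M(n,n,n)`, `n ≥ 4`, have product `det M = 1 - 3c² + c⁴ < 0`, where
`c = cos (π / n)` satisfies `1/2 ≤ c² ≤ 1`; so none of them vanishes and an odd number of them is
negative. By Gershgorin's theorem every eigenvalue is at most `1 + 2 = 3`, while their sum is
`tr M = 4`, so at least two of them are positive. Hence exactly one is negative and three are
positive.
-/

open Finset

section Signs

variable {ι R : Type*} {s : Finset ι} {f : ι → R}

theorem Finset.odd_card_filter_neg_of_prod_neg [CommRing R] [LinearOrder R] [IsOrderedRing R]
    (h : ∏ i ∈ s, f i < 0) : Odd #{i ∈ s | f i < 0} := by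
  by_contra heven
  rw [Nat.not_odd_iff_even] at heven
  refine h.not_ge ?_
  rw [← prod_filter_mul_prod_filter_not s (fun i => f i < 0)]
  refine mul_nonneg ?_ (prod_nonneg fun i hi => not_lt.mp (mem_filter.mp hi).2)
  rw [← prod_congr rfl fun i _ => neg_neg (f i), prod_neg, heven.neg_one_pow, one_mul]
  exact prod_nonneg fun i hi => (neg_pos.mpr (mem_filter.mp hi).2).le

theorem Finset.sum_le_card_filter_pos_mul [Semiring R] [LinearOrder R] [IsOrderedAddMonoid R]
    {b : R} (hb : ∀ i ∈ s, f i ≤ b) : ∑ i ∈ s, f i ≤ #{i ∈ s | 0 < f i} * b :=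
  calc ∑ i ∈ s, f i = ∑ i ∈ s with 0 < f i, f i + ∑ i ∈ s with ¬0 < f i, f i :=
        (sum_filter_add_sum_filter_not s _ f).symm
    _ ≤ ∑ i ∈ s with 0 < f i, b + 0 :=
        add_le_add (sum_le_sum fun i hi => hb i (mem_filter.mp hi).1)
          (sum_nonpos fun i hi => not_lt.mp (mem_filter.mp hi).2)
    _ = #{i ∈ s | 0 < f i} * b := by rw [add_zero, sum_const, nsmul_eq_mul]

theorem Finset.card_filter_neg_add_card_filter_pos [Zero R] [LinearOrder R]
    (hf : ∀ i ∈ s, f i ≠ 0) : #{i ∈ s | f i < 0} + #{i ∈ s | 0 < f i} = #s := by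
  rw [← card_filter_add_card_filter_not (s := s) (fun i => f i < 0)]
  congr 2
  exact filter_congr fun i hi => (not_lt.trans (hf i hi).symm.le_iff_lt).symm

end Signs

theorem Matrix.IsHermitian.eigenvalues_le_of_gershgorin {n : Type*} [Fintype n] [DecidableEq n]
    {A : Matrix n n ℝ} (hA : A.IsHermitian) {b : ℝ}
    (hb : ∀ k, A k k + ∑ j ∈ univ.erase k, |A k j| ≤ b) (i : n) :
    hA.eigenvalues i ≤ b := by
  have hμ : Module.End.HasEigenvalue (toLin' A) (hA.eigenvalues i) := by
    rw [Module.End.hasEigenvalue_iff_mem_spectrum, spectrum_toLin']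
    exact hA.eigenvalues_mem_spectrum_real i
  obtain ⟨k, hk⟩ := eigenvalue_mem_ball hμ
  rw [Metric.mem_closedBall, Real.dist_eq] at hk
  simp only [Real.norm_eq_abs] at hk
  linarith [le_abs_self (hA.eigenvalues i - A k k), hb k]

theorem one_half_le_cos_sq_pi_div {n : ℕ} (hn : 4 ≤ n) : 1 / 2 ≤ cos (π / n) ^ 2 := by
  have hn' : (4 : ℝ) ≤ n := by exact_mod_cast hn
  have hpos : 0 ≤ π / n := by positivity
  have hle : π / n ≤ π / 4 := div_le_div_of_nonneg_left pi_pos.le (by norm_num) hn'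
  have hcos : 0 ≤ cos (2 * (π / n)) :=
    cos_nonneg_of_neg_pi_div_two_le_of_le (by linarith [pi_pos]) (by linarith)
  rw [cos_sq]
  linarith

theorem coxeterSchlafli_isHermitian (u v w : ℕ) : (coxeterSchlafli u v w).IsHermitian := by
  ext i j
  fin_cases i <;> fin_cases j <;> simp [coxeterSchlafli]

theorem trace_coxeterSchlafli (u v w : ℕ) : (coxeterSchlafli u v w).trace = 4 := by
  simp [coxeterSchlafli, trace, Fin.sum_univ_four]
  norm_num

theorem det_coxeterSchlafli (u v w : ℕ) :
    (coxeterSchlafli u v w).det = 1 - cos (π / u) ^ 2 - cos (π / v) ^ 2 - cos (π / w) ^ 2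
      + cos (π / u) ^ 2 * cos (π / w) ^ 2 := by
  simp [coxeterSchlafli, det_succ_row_zero, Fin.sum_univ_succ, Fin.succAbove]
  ring

theorem det_coxeterSchlafli_neg {n : ℕ} (hn : 4 ≤ n) : (coxeterSchlafli n n n).det < 0 := by
  rw [det_coxeterSchlafli]
  nlinarith [one_half_le_cos_sq_pi_div hn, cos_sq_le_one (π / n)]

theorem coxeterSchlafli_eigenvalues_le_three (u v w : ℕ)
    (hM : (coxeterSchlafli u v w).IsHermitian) (i : Fin 4) : hM.eigenvalues i ≤ 3 := by
  refine hM.eigenvalues_le_of_gershgorin (fun k => ?_) i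
  have := abs_cos_le_one (π / u)
  have := abs_cos_le_one (π / v)
  have := abs_cos_le_one (π / w)
  fin_cases k <;> simp [coxeterSchlafli, Fin.sum_univ_succ, sum_erase_eq_sub] <;> linarith

theorem coxeterSchlafli_signature (z : ℕ) (hz : 3 ≤ z) :
    ∃ hM : (coxeterSchlafli (2*z) (2*z) (2*z)).IsHermitian,
      (Finset.univ.filter fun i => hM.eigenvalues i < 0).card = 1 ∧
      (Finset.univ.filter fun i => 0 < hM.eigenvalues i).card = 3 := by
  let hM := coxeterSchlafli_isHermitian (2 * z) (2 * z) (2 * z)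
  refine ⟨hM, ?_⟩
  have hprod : ∏ i, hM.eigenvalues i < 0 := by
    simpa only [hM.det_eq_prod_eigenvalues, RCLike.ofReal_real_eq_id, id] using
      det_coxeterSchlafli_neg (by omega : 4 ≤ 2 * z)
  have hsum : ∑ i, hM.eigenvalues i = 4 := by
    simpa only [hM.trace_eq_sum_eigenvalues, RCLike.ofReal_real_eq_id, id] using
      trace_coxeterSchlafli (2 * z) (2 * z) (2 * z)
  obtain ⟨k, hodd⟩ := odd_card_filter_neg_of_prod_neg hprod
  have hcard : #{i | hM.eigenvalues i < 0} + #{i | 0 < hM.eigenvalues i} = 4 :=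
    card_filter_neg_add_card_filter_pos (prod_ne_zero_iff.mp hprod.ne)
  have hpos : 4 ≤ #{i | 0 < hM.eigenvalues i} * 3 := by
    exact_mod_cast hsum ▸ sum_le_card_filter_pos_mul fun i _ =>
      coxeterSchlafli_eigenvalues_le_three _ _ _ hM i
  omega
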